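/- arXiv:2302.06396 — 4 statements merged into one kernel-verified Lean document; each statement's English description precedes it below -/
import Mathlib

section
/- Every algebraic function over C(x) (C algebraically closed of characteristic zero) that is integral at every point of C and also integral at infinity (i.e., all its Puiseux series expansions at every point of the projective line have nonnegative starting exponent) is a constant, i.e., an element of C. -/
/-! Since `C[x]` and the valuation ring `O∞` at infinity are integrally closed with fraction field
`C(x)`, integrality of `u` over both forces the coefficients of its minimal polynomial over `C(x)`
into `C[x] ∩ O∞ = C`. So `u` is integral over the algebraically closed field `C`, hence lies in
`C`. -/

open Polynomial

section Lifts

variable {R K E : Type*} [Field K] [CommRing E] [Algebra K E]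

theorem isIntegral_of_monic_mem_lifts [CommRing R] [Algebra R K] [Algebra R E]
    [IsScalarTower R K E] {u : E} {p : K[X]}
    (hp : p ∈ lifts (algebraMap R K)) (hmonic : p.Monic) (hu : aeval u p = 0) :
    IsIntegral R u := by
  obtain ⟨P, rfl, -, hP⟩ := lifts_and_natDegree_eq_and_monic hp hmonic
  exact ⟨P, hP, by rwa [← aeval_def, ← aeval_map_algebraMap K]⟩

theorem minpoly_mem_lifts_of_monic_mem_lifts [CommRing R] [IsDomain R] [IsIntegrallyClosed R]
    [Algebra R K] [IsFractionRing R K] [IsDomain E] {u : E} {p : K[X]}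
    (hp : p ∈ lifts (algebraMap R K)) (hmonic : p.Monic) (hu : aeval u p = 0) :
    minpoly K u ∈ lifts (algebraMap R K) := by
  let _ : Algebra R E := ((algebraMap K E).comp (algebraMap R K)).toAlgebra
  have : IsScalarTower R K E := .of_algebraMap_eq fun _ => rfl
  rw [minpoly.isIntegrallyClosed_eq_field_fractions' K (isIntegral_of_monic_mem_lifts hp hmonic hu)]
  exact ⟨_, rfl⟩

theorem exists_eq_algebraMap_of_monic_mem_lifts [Field R] [IsAlgClosed R] [Algebra R K]
    [IsDomain E] {u : E} {p : K[X]} (hp : p ∈ lifts (algebraMap R K)) (hmonic : p.Monic)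
    (hu : aeval u p = 0) : ∃ c : R, u = algebraMap K E (algebraMap R K c) := by
  let _ : Algebra R E := ((algebraMap K E).comp (algebraMap R K)).toAlgebra
  have : IsScalarTower R K E := .of_algebraMap_eq fun _ => rfl
  have hint := isIntegral_of_monic_mem_lifts hp hmonic hu
  obtain ⟨c, hc⟩ := minpoly.mem_range_of_degree_eq_one R u
    (IsAlgClosed.degree_eq_one_of_irreducible R (minpoly.irreducible hint))
  exact ⟨c, hc.symm⟩

end Lifts

namespace RatFunc

variable {F : Type*} [Field F]

theorem mem_inftyValuation_valuationSubring_iff [DecidableEq (RatFunc F)] {f : RatFunc F} :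
    f ∈ (inftyValuation F).valuationSubring ↔ f.intDegree ≤ 0 := by
  rcases eq_or_ne f 0 with rfl | hf
  · simp
  · rw [Valuation.mem_valuationSubring_iff, inftyValuation_apply, inftyValuation_of_nonzero F hf,
      ← WithZero.exp_zero, WithZero.exp_le_exp]

theorem mem_range_C_of_intDegree_nonpos {f : RatFunc F}
    (hf : f ∈ Set.range (algebraMap F[X] (RatFunc F))) (hdeg : f.intDegree ≤ 0) :
    f ∈ Set.range (C : F →+* RatFunc F) := by
  obtain ⟨a, rfl⟩ := hf
  rw [intDegree_polynomial, Nat.cast_nonpos] at hdeg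
  exact ⟨a.coeff 0, by rw [← algebraMap_C, ← eq_C_of_natDegree_eq_zero hdeg]⟩

end RatFunc

theorem algebraic_integral_everywhere_is_constant_general
    (C : Type) [Field C] [IsAlgClosed C]
    (E : Type) [Field E] [Algebra (RatFunc C) E]
    (u : E)
    (hfin : ∃ p : Polynomial (RatFunc C), p.Monic ∧
      (∀ i, ∃ a : Polynomial C, p.coeff i = algebraMap (Polynomial C) (RatFunc C) a) ∧
      Polynomial.aeval u p = 0)
    (hinf : ∃ p : Polynomial (RatFunc C), p.Monic ∧
      (∀ i, (p.coeff i).intDegree ≤ 0) ∧ Polynomial.aeval u p = 0) :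
    ∃ c : C, u = algebraMap (RatFunc C) E (RatFunc.C c) := by
  classical
  obtain ⟨p, hp_monic, hp_coeff, hpu⟩ := hfin
  obtain ⟨q, hq_monic, hq_coeff, hqu⟩ := hinf
  have hfinite : minpoly (RatFunc C) u ∈ lifts (algebraMap C[X] (RatFunc C)) :=
    minpoly_mem_lifts_of_monic_mem_lifts
      ((lifts_iff_coeff_lifts p).2 fun i => (hp_coeff i).imp fun _ => Eq.symm) hp_monic hpu
  have hinfty : minpoly (RatFunc C) u ∈
      lifts (algebraMap (RatFunc.inftyValuation C).valuationSubring (RatFunc C)) :=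
    minpoly_mem_lifts_of_monic_mem_lifts ((lifts_iff_coeff_lifts q).2 fun i =>
      ⟨⟨_, RatFunc.mem_inftyValuation_valuationSubring_iff.2 (hq_coeff i)⟩, rfl⟩) hq_monic hqu
  have hconst : minpoly (RatFunc C) u ∈ lifts (algebraMap C (RatFunc C)) := by
    rw [lifts_iff_coeff_lifts] at hfinite hinfty ⊢
    intro i
    obtain ⟨⟨f, hf⟩, hfi⟩ := hinfty i
    exact RatFunc.mem_range_C_of_intDegree_nonpos (hfinite i)
      (hfi ▸ RatFunc.mem_inftyValuation_valuationSubring_iff.1 hf)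
  exact exists_eq_algebraMap_of_monic_mem_lifts hconst (minpoly.monic ⟨p, hp_monic, hpu⟩)
    (minpoly.aeval _ u)

theorem algebraic_integral_everywhere_is_constant
    (C : Type) [Field C] [IsAlgClosed C] [CharZero C]
    (E : Type) [Field E] [Algebra (RatFunc C) E]
    (u : E) (halg : IsAlgebraic (RatFunc C) u)
    (hfin : ∃ p : Polynomial (RatFunc C), p.Monic ∧
      (∀ i, ∃ a : Polynomial C, p.coeff i = algebraMap (Polynomial C) (RatFunc C) a) ∧
      Polynomial.aeval u p = 0)
    (hinf : ∃ p : Polynomial (RatFunc C), p.Monic ∧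
      (∀ i, (p.coeff i).intDegree ≤ 0) ∧ Polynomial.aeval u p = 0) :
    ∃ c : C, u = algebraMap (RatFunc C) E (RatFunc.C c) :=
  algebraic_integral_everywhere_is_constant_general C E u hfin hinf
end

section
/- Let L ∈ K[D] be a linear differential operator of order r, and let E be a differential field extension of K whose constant field is C and in which the solution space V(L) has dimension r. For P ∈ K[D] with ord(P) < r, the class [P]_L is a constant of K[D]/⟨L⟩ (i.e., D·[P]_L = 0) if and only if P·f is a constant for every f ∈ V(L). -/
/- Framework: linear differential operators over K = C(x), represented as
   `Polynomial (RatFunc C)` where `X^i` stands for `D^i` (coefficients on the left);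
   local (Puiseux/Hahn series) solutions at finite points and at infinity;
   integrality; constants and pseudoconstants of `K[D]/⟨L⟩`. -/

noncomputable section
open Polynomial

variable (C : Type) [Field C] [IsAlgClosed C] [CharZero C]

/-- The derivative d/dx on K = C(x). -/
def KDeriv (r : RatFunc C) : RatFunc C :=
  (algebraMap (Polynomial C) (RatFunc C) (derivative r.num) * algebraMap _ _ r.denom
    - algebraMap _ _ r.num * algebraMap _ _ (derivative r.denom))
  / (algebraMap (Polynomial C) (RatFunc C) r.denom) ^ 2

/-- Linear differential operators `∑ aᵢ Dⁱ` with `aᵢ ∈ C(x)`, encoded as polynomials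
    whose `i`-th coefficient is the coefficient of `Dⁱ`. -/
abbrev DOp := Polynomial (RatFunc C)

/-- Left multiplication by `D` in `K[D]`: `D·(∑ aᵢ Dⁱ) = ∑ aᵢ Dⁱ⁺¹ + ∑ aᵢ' Dⁱ`. -/
def Dmul (P : DOp C) : DOp C :=
  X * P + P.sum fun i a => Polynomial.C (KDeriv C a) * X ^ i

/-- Multiplication (composition) in the noncommutative ring `K[D]`. -/
def opMul (P Q : DOp C) : DOp C :=
  P.sum fun i a => Polynomial.C a * (Dmul C)^[i] Q

/-- The adjoint `L ↦ L*`: `(∑ aᵢ Dⁱ)* = ∑ (−D)ⁱ aᵢ`. -/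
def adjoint (L : DOp C) : DOp C :=
  L.sum fun i a => (-1) ^ i * (Dmul C)^[i] (Polynomial.C a)

/-- Application of an operator to an element of `K` itself (rational solutions). -/
def KApply (L : DOp C) (q : RatFunc C) : RatFunc C :=
  L.sum fun i a => a * (KDeriv C)^[i] q

/-- `[P]_L` is zero in `K[D]/⟨L⟩`, i.e. `P` is a left multiple of `L`. -/
def IsZeroClass (L P : DOp C) : Prop := ∃ Q : DOp C, P = opMul C Q L

/-- `[P]_L` is a constant of `K[D]/⟨L⟩`, i.e. `D·[P]_L = [0]_L`. -/
def IsConstantClass (L P : DOp C) : Prop := ∃ Q : DOp C, Dmul C P = opMul C Q L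

/-- `N = lclm(L, M)`: the monic common left multiple of `L` and `M` of lowest order. -/
def IsLCLM (L M N : DOp C) : Prop :=
  N.Monic ∧ (∃ A, N = opMul C A L) ∧ (∃ B, N = opMul C B M) ∧
    ∀ N' : DOp C, N'.Monic → (∃ A, N' = opMul C A L) → (∃ B, N' = opMul C B M) →
      N.natDegree ≤ N'.natDegree

/-- A differential field extension of `K = C(x)`. -/
structure DiffExt where
  carrier : Type
  [isField : Field carrier]
  [isAlgK : Algebra (RatFunc C) carrier]
  [isAlgC : Algebra C carrier]
  [isTower : IsScalarTower C (RatFunc C) carrier]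
  δ : carrier → carrier
  δ_add : ∀ a b, δ (a + b) = δ a + δ b
  δ_mul : ∀ a b, δ (a * b) = a * δ b + δ a * b
  δ_algebraMap : ∀ r : RatFunc C,
    δ (algebraMap (RatFunc C) carrier r) = algebraMap (RatFunc C) carrier (KDeriv C r)

attribute [instance] DiffExt.isField DiffExt.isAlgK DiffExt.isAlgC DiffExt.isTower

/-- Application of an operator `L = ∑ aᵢ Dⁱ` to an element of a differential extension. -/
def DiffExt.apply (F : DiffExt C) (L : DOp C) (f : F.carrier) : F.carrier :=
  L.sum fun i a => algebraMap (RatFunc C) F.carrier a * F.δ^[i] f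

/-- Formal derivative `d/dt` on generalized (Hahn/Puiseux) series with rational exponents. -/
def hderiv (f : HahnSeries ℚ C) : HahnSeries ℚ C :=
  HahnSeries.embDomain (OrderIso.addRight (-1 : ℚ)).toOrderEmbedding
    { coeff := fun γ => γ • f.coeff γ,
      isPWO_support' := f.isPWO_support.mono (by
        intro γ hγ
        simp only [Function.mem_support, ne_eq] at hγ ⊢
        intro hc
        exact hγ (by rw [hc, smul_zero]) ) }

/-- The derivation `d/dx = -t² d/dt` on series at infinity, in the local coordinate `t = 1/x`. -/
def dinf (f : HahnSeries ℚ C) : HahnSeries ℚ C :=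
  -(HahnSeries.single (2 : ℚ) (1 : C) * hderiv C f)

/-- `ι` is a series expansion of `C(x)` (at a finite point for `δ = hderiv`, at infinity
    for `δ = dinf`), i.e. a ring embedding compatible with differentiation. -/
def IsExpansion (δ : HahnSeries ℚ C → HahnSeries ℚ C)
    (ι : RatFunc C →+* HahnSeries ℚ C) : Prop :=
  ∀ r, ι (KDeriv C r) = δ (ι r)

/-- Application of an operator to a local series solution via the expansion `ι`. -/
def localApply (δ : HahnSeries ℚ C → HahnSeries ℚ C)
    (ι : RatFunc C →+* HahnSeries ℚ C) (L : DOp C) (f : HahnSeries ℚ C) : HahnSeries ℚ C :=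
  L.sum fun i a => ι a * δ^[i] f

/-- A series is integral if it has no pole, i.e. all exponents are ≥ 0. -/
def IntegralSeries (f : HahnSeries ℚ C) : Prop := ∀ γ < (0 : ℚ), f.coeff γ = 0

/-- `[P]_L` is completely integral: at every point of `C ∪ {∞}` and every local series
    solution `f` of `L` there, `P·f` has no pole. -/
def CompletelyIntegral (L P : DOp C) : Prop :=
  ∀ δ ∈ ({hderiv C, dinf C} : Set (HahnSeries ℚ C → HahnSeries ℚ C)),
    ∀ ι : RatFunc C →+* HahnSeries ℚ C, IsExpansion C δ ι →
      ∀ f : HahnSeries ℚ C, localApply C δ ι L f = 0 →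
        IntegralSeries C (localApply C δ ι P f)

/-- A pseudoconstant of `L`: a completely integral element of `K[D]/⟨L⟩` that is not
    a constant. -/
def IsPseudoconstant (L P : DOp C) : Prop :=
  CompletelyIntegral C L P ∧ ¬ IsConstantClass C L P

def HasPseudoconstant (L : DOp C) : Prop := ∃ P : DOp C, IsPseudoconstant C L P

/-- `S` is the `s`-th symmetric power of `L`: the monic operator of minimal order
    annihilating all products of `s` solutions of `L`. -/
def IsSymPow (L S : DOp C) (s : ℕ) : Prop :=
  S.Monic ∧
  (∀ F : DiffExt C, ∀ f : Fin s → F.carrier,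
      (∀ i, F.apply C L (f i) = 0) → F.apply C S (∏ i, f i) = 0) ∧
  (∀ S' : DOp C, S'.Monic →
      (∀ F : DiffExt C, ∀ f : Fin s → F.carrier,
        (∀ i, F.apply C L (f i) = 0) → F.apply C S' (∏ i, f i) = 0) →
      S.natDegree ≤ S'.natDegree)

/-- `L` has only algebraic solutions: there is an algebraic differential extension of `K`
    in which the solution space of `L` has dimension `ord L`. -/
def AllAlgebraic (L : DOp C) : Prop :=
  ∃ F : DiffExt C, Algebra.IsAlgebraic (RatFunc C) F.carrier ∧
    ∃ b : Fin L.natDegree → F.carrier,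
      (∀ i, F.apply C L (b i) = 0) ∧ LinearIndependent C b

namespace DOpAux
variable {E : Type*} [Field E] (δ : E → E)

def dmap (P : Polynomial E) : Polynomial E := P.sum fun i a => Polynomial.C (δ a) * X ^ i

def gDmul (P : Polynomial E) : Polynomial E := X * P + dmap δ P

def gapply (P : Polynomial E) (f : E) : E := P.sum fun i a => a * δ^[i] f

def gopMul (P Q : Polynomial E) : Polynomial E := P.sum fun i a => Polynomial.C a * (gDmul δ)^[i] Q

lemma coeff_dmap (h0 : δ 0 = 0) (P : Polynomial E) (n : ℕ) :
    (dmap δ P).coeff n = δ (P.coeff n) := by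
  rw [dmap, Polynomial.sum_def, finset_sum_coeff]
  simp only [coeff_C_mul, coeff_X_pow, mul_ite, mul_one, mul_zero]
  rw [Finset.sum_ite_eq P.support n (fun i => δ (P.coeff i))]
  by_cases h : n ∈ P.support
  · simp [h]
  · simp only [h, if_false]
    rw [Polynomial.notMem_support_iff.mp h, h0]

lemma natDegree_dmap_le (h0 : δ 0 = 0) (P : Polynomial E) :
    (dmap δ P).natDegree ≤ P.natDegree := by
  apply Polynomial.natDegree_le_iff_coeff_eq_zero.mpr
  intro n hn
  rw [coeff_dmap δ h0, Polynomial.coeff_eq_zero_of_natDegree_lt hn, h0]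

lemma natDegree_gDmul_le (h0 : δ 0 = 0) (P : Polynomial E) :
    (gDmul δ P).natDegree ≤ P.natDegree + 1 := by
  apply (Polynomial.natDegree_add_le _ _).trans
  simp only [max_le_iff]
  constructor
  · apply (Polynomial.natDegree_mul_le).trans
    have := Polynomial.natDegree_X_le (R := E)
    omega
  · exact (natDegree_dmap_le δ h0 P).trans (Nat.le_succ _)

lemma coeff_gDmul_succ (h0 : δ 0 = 0) (P : Polynomial E) (n : ℕ) :
    (gDmul δ P).coeff (n + 1) = P.coeff n + δ (P.coeff (n + 1)) := by
  rw [gDmul, Polynomial.coeff_add, Polynomial.coeff_X_mul, coeff_dmap δ h0]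

lemma coeff_gDmul_zero (h0 : δ 0 = 0) (P : Polynomial E) :
    (gDmul δ P).coeff 0 = δ (P.coeff 0) := by
  rw [gDmul, Polynomial.coeff_add, Polynomial.mul_coeff_zero, Polynomial.coeff_X_zero,
    zero_mul, zero_add, coeff_dmap δ h0]

lemma gDmul_iter_bound (h0 : δ 0 = 0) (Q : Polynomial E) (k : ℕ) :
    ((gDmul δ)^[k] Q).natDegree ≤ Q.natDegree + k ∧
      ((gDmul δ)^[k] Q).coeff (Q.natDegree + k) = Q.leadingCoeff := by
  induction k with
  | zero => exact ⟨le_refl _, rfl⟩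
  | succ k ih =>
    rw [Function.iterate_succ_apply']
    refine ⟨((natDegree_gDmul_le δ h0 _).trans (by omega)), ?_⟩
    rw [← Nat.add_assoc, coeff_gDmul_succ δ h0, ih.2,
      Polynomial.coeff_eq_zero_of_natDegree_lt (lt_of_le_of_lt ih.1 (by omega)), h0, add_zero]

lemma coeff_gDmul_iter_zero (h0 : δ 0 = 0) (w : E) (k : ℕ) :
    ((gDmul δ)^[k] (Polynomial.C w)).coeff 0 = δ^[k] w := by
  induction k with
  | zero => simp
  | succ k ih =>
    rw [Function.iterate_succ_apply', coeff_gDmul_zero δ h0, ih]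
    exact (Function.iterate_succ_apply' δ k w).symm


lemma gapply_eq_sum_range {P : Polynomial E} {N : ℕ} (hN : P.natDegree < N) (f : E) :
    gapply δ P f = ∑ i ∈ Finset.range N, P.coeff i * δ^[i] f := by
  rw [gapply]
  exact Polynomial.sum_over_range' P (f := fun i a => a * δ^[i] f) (fun _ => zero_mul _) N hN

lemma gapply_zero (f : E) : gapply δ 0 f = 0 := Polynomial.sum_zero_index _

lemma gapply_add (P Q : Polynomial E) (f : E) :
    gapply δ (P + Q) f = gapply δ P f + gapply δ Q f := by
  set N := max P.natDegree Q.natDegree + 1 with hNdef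
  have h1 : P.natDegree < N := by omega
  have h2 : Q.natDegree < N := by omega
  have h3 : (P + Q).natDegree < N :=
    lt_of_le_of_lt (Polynomial.natDegree_add_le _ _) (by omega)
  rw [gapply_eq_sum_range δ h1, gapply_eq_sum_range δ h2, gapply_eq_sum_range δ h3,
    ← Finset.sum_add_distrib]
  exact Finset.sum_congr rfl fun i _ => by rw [Polynomial.coeff_add, add_mul]

lemma gapply_C_mul (a : E) (Q : Polynomial E) (f : E) :
    gapply δ (Polynomial.C a * Q) f = a * gapply δ Q f := by
  have h1 : (Polynomial.C a * Q).natDegree < Q.natDegree + 1 :=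
    lt_of_le_of_lt (Polynomial.natDegree_C_mul_le a Q) (by omega)
  rw [gapply_eq_sum_range δ h1, gapply_eq_sum_range δ (Nat.lt_succ_self _), Finset.mul_sum]
  exact Finset.sum_congr rfl fun i _ => by rw [Polynomial.coeff_C_mul, mul_assoc]

lemma gapply_X_mul (Q : Polynomial E) (f : E) :
    gapply δ (X * Q) f = gapply δ Q (δ f) := by
  have h1 : (X * Q).natDegree < Q.natDegree + 1 + 1 := by
    have := Polynomial.natDegree_mul_le (p := (X : Polynomial E)) (q := Q)
    have := Polynomial.natDegree_X_le (R := E)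
    omega
  rw [gapply_eq_sum_range δ h1, gapply_eq_sum_range δ (Nat.lt_succ_self Q.natDegree),
    Finset.sum_range_succ']
  simp only [Polynomial.coeff_X_mul, Polynomial.mul_coeff_zero, Polynomial.coeff_X_zero,
    zero_mul, add_zero, Function.iterate_succ_apply]

lemma gapply_one (f : E) : gapply δ 1 f = f := by
  rw [gapply_eq_sum_range δ (N := 1) (by simp)]
  simp

lemma gapply_C (a : E) (f : E) : gapply δ (Polynomial.C a) f = a * f := by
  rw [← mul_one (Polynomial.C a), gapply_C_mul, gapply_one]

lemma gapply_gDmul (hadd : ∀ a b, δ (a + b) = δ a + δ b)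
    (hmul : ∀ a b, δ (a * b) = a * δ b + δ a * b) (P : Polynomial E) (f : E) :
    gapply δ (gDmul δ P) f = δ (gapply δ P f) := by
  have h0 : δ 0 = 0 := by
    have := hadd 0 0; simpa using this.symm
  have hdm : (dmap δ P).natDegree < P.natDegree + 1 :=
    lt_of_le_of_lt (natDegree_dmap_le δ h0 P) (by omega)
  let δh : E →+ E := AddMonoidHom.mk' δ hadd
  have hδh : ∀ x, δh x = δ x := fun _ => rfl
  rw [gDmul, gapply_add, gapply_X_mul,
    gapply_eq_sum_range δ hdm, gapply_eq_sum_range δ (Nat.lt_succ_self P.natDegree) (δ f),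
    gapply_eq_sum_range δ (Nat.lt_succ_self P.natDegree) f]
  have hsum : δ (∑ i ∈ Finset.range (P.natDegree + 1), P.coeff i * δ^[i] f)
      = ∑ i ∈ Finset.range (P.natDegree + 1), δ (P.coeff i * δ^[i] f) :=
    map_sum δh _ _
  rw [Nat.succ_eq_add_one, hsum, ← Finset.sum_add_distrib]
  refine Finset.sum_congr rfl fun i _ => ?_
  rw [hmul, coeff_dmap δ h0, ← Function.iterate_succ_apply δ i f,
    Function.iterate_succ_apply' δ i f]

lemma gapply_gDmul_iter (hadd : ∀ a b, δ (a + b) = δ a + δ b)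
    (hmul : ∀ a b, δ (a * b) = a * δ b + δ a * b) (B : Polynomial E) (k : ℕ) (f : E) :
    gapply δ ((gDmul δ)^[k] B) f = δ^[k] (gapply δ B f) := by
  induction k with
  | zero => rfl
  | succ k ih =>
    rw [Function.iterate_succ_apply', Function.iterate_succ_apply',
      gapply_gDmul δ hadd hmul, ih]

lemma gapply_gopMul (hadd : ∀ a b, δ (a + b) = δ a + δ b)
    (hmul : ∀ a b, δ (a * b) = a * δ b + δ a * b) (A B : Polynomial E) (f : E) :
    gapply δ (gopMul δ A B) f = gapply δ A (gapply δ B f) := by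
  let gh : Polynomial E →+ E := AddMonoidHom.mk' (fun P => gapply δ P f) (fun P Q => gapply_add δ P Q f)
  have hgh : ∀ P, gh P = gapply δ P f := fun _ => rfl
  rw [gopMul, Polynomial.sum_def, ← hgh, map_sum, gapply]
  rw [Polynomial.sum_def]
  refine Finset.sum_congr rfl fun i _ => ?_
  rw [hgh, gapply_C_mul, gapply_gDmul_iter δ hadd hmul]


lemma gopMul_zero_left (L : Polynomial E) : gopMul δ 0 L = 0 := Polynomial.sum_zero_index _

lemma gopMul_add_left (A B L : Polynomial E) :
    gopMul δ (A + B) L = gopMul δ A L + gopMul δ B L :=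
  Polynomial.sum_add_index A B _ (fun i => by simp) (fun i b₁ b₂ => by rw [map_add, add_mul])

lemma gopMul_monomial (a : E) (k : ℕ) (L : Polynomial E) :
    gopMul δ (Polynomial.C a * X ^ k) L = Polynomial.C a * (gDmul δ)^[k] L := by
  rw [gopMul, Polynomial.C_mul_X_pow_eq_monomial, Polynomial.sum_monomial_index]
  simp

lemma natDegree_gopMul_le (h0 : δ 0 = 0) (A B : Polynomial E) :
    (gopMul δ A B).natDegree ≤ A.natDegree + B.natDegree := by
  rw [gopMul, Polynomial.sum_def]
  apply Polynomial.natDegree_sum_le_of_forall_le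
  intro i hi
  refine (Polynomial.natDegree_C_mul_le _ _).trans (((gDmul_iter_bound δ h0 B i).1).trans ?_)
  have := Polynomial.le_natDegree_of_mem_supp i hi
  omega

lemma coeff_gopMul_C_zero (h0 : δ 0 = 0) (R : Polynomial E) (w : E) :
    (gopMul δ R (Polynomial.C w)).coeff 0 = gapply δ R w := by
  rw [gopMul, Polynomial.sum_def, finset_sum_coeff, gapply, Polynomial.sum_def]
  refine Finset.sum_congr rfl fun i _ => ?_
  rw [Polynomial.coeff_C_mul, coeff_gDmul_iter_zero δ h0]

lemma eq_zero_of_gopMul_C_eq_zero (h0 : δ 0 = 0) (R : Polynomial E) (w : E) (hw : w ≠ 0)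
    (h : gopMul δ R (Polynomial.C w) = 0) : R = 0 := by
  by_contra hR
  set d := R.natDegree with hd
  have hcoeff : (gopMul δ R (Polynomial.C w)).coeff d = R.coeff d * w := by
    rw [gopMul, Polynomial.sum_def, finset_sum_coeff]
    rw [Finset.sum_eq_single d]
    · rw [Polynomial.coeff_C_mul]
      have h2 := (gDmul_iter_bound δ h0 (Polynomial.C w) d).2
      rw [Polynomial.natDegree_C, Polynomial.leadingCoeff_C, zero_add] at h2
      rw [h2]
    · intro i hi hne
      have hile : i ≤ d := Polynomial.le_natDegree_of_mem_supp i hi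
      have : (Polynomial.C (R.coeff i) * (gDmul δ)^[i] (Polynomial.C w)).natDegree < d := by
        have := (Polynomial.natDegree_C_mul_le (R.coeff i) ((gDmul δ)^[i] (Polynomial.C w)))
        have h3 := (gDmul_iter_bound δ h0 (Polynomial.C w) i).1
        rw [Polynomial.natDegree_C] at h3
        omega
      exact Polynomial.coeff_eq_zero_of_natDegree_lt this
    · intro hd'
      simp [Polynomial.notMem_support_iff.mp hd']
  rw [h, Polynomial.coeff_zero] at hcoeff
  have : R.coeff d = 0 := by
    rcases mul_eq_zero.mp hcoeff.symm with h' | h'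
    · exact h'
    · exact absurd h' hw
  exact hR (Polynomial.leadingCoeff_eq_zero.mp this)

lemma division (h0 : δ 0 = 0) (L : Polynomial E) (hL1 : 1 ≤ L.natDegree) :
    ∀ n (P : Polynomial E), P.natDegree ≤ n →
      ∃ Q R : Polynomial E, P = gopMul δ Q L + R ∧ R.natDegree < L.natDegree := by
  intro n
  induction n using Nat.strong_induction_on with
  | _ n ih =>
    intro P hPn
    by_cases hlt : P.natDegree < L.natDegree
    · exact ⟨0, P, by rw [gopMul_zero_left, zero_add], hlt⟩
    · push_neg at hlt
      have hP0 : P ≠ 0 := by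
        intro h
        rw [h, Polynomial.natDegree_zero] at hlt
        omega
      have hL0 : L ≠ 0 := by
        intro h
        rw [h, Polynomial.natDegree_zero] at hL1
        omega
      set d := P.natDegree with hd
      set k := d - L.natDegree with hk
      set a := P.leadingCoeff / L.leadingCoeff with ha
      set M := Polynomial.C a * (gDmul δ)^[k] L with hM
      have hLk : L.natDegree + k = d := by omega
      have hMdeg : M.natDegree ≤ d := by
        refine (Polynomial.natDegree_C_mul_le _ _).trans ?_
        refine ((gDmul_iter_bound δ h0 L k).1).trans (by omega)
      have hMcoeff : M.coeff d = P.leadingCoeff := by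
        rw [hM, Polynomial.coeff_C_mul, ← hLk, (gDmul_iter_bound δ h0 L k).2, ha,
          div_mul_cancel₀ _ (Polynomial.leadingCoeff_ne_zero.mpr hL0)]
      set P' := P - M with hP'
      have hP'deg : P'.natDegree < d := by
        by_cases hz : P' = 0
        · rw [hz, Polynomial.natDegree_zero]; omega
        · have hle : P'.natDegree ≤ d :=
            (Polynomial.natDegree_sub_le _ _).trans (by simp [hMdeg, ← hd])
          have hc : P'.coeff d = 0 := by
            rw [hP', Polynomial.coeff_sub, hMcoeff, Polynomial.coeff_natDegree, sub_self]
          rcases lt_or_eq_of_le hle with h' | h'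
          · exact h'
          · exfalso
            exact hz (Polynomial.leadingCoeff_eq_zero.mp (by rw [Polynomial.leadingCoeff, h', hc]))
      obtain ⟨Q', R, hQR, hR⟩ := ih P'.natDegree (lt_of_lt_of_le hP'deg hPn) P' le_rfl
      refine ⟨Polynomial.C a * X ^ k + Q', R, ?_, hR⟩
      rw [gopMul_add_left, gopMul_monomial, ← hM]
      have : P = M + P' := by rw [hP']; ring
      rw [this, hQR]
      ring

lemma vanish {C : Type*} [Field C] (ac : C →+* E)
    (hadd : ∀ a b, δ (a + b) = δ a + δ b)
    (hmul : ∀ a b, δ (a * b) = a * δ b + δ a * b)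
    (hconst : ∀ f : E, δ f = 0 ↔ ∃ c : C, f = ac c) :
    ∀ n (g : Fin (n + 1) → E),
      (∀ c : Fin (n + 1) → C, ∑ i, ac (c i) * g i = 0 → ∀ i, c i = 0) →
      ∀ R : Polynomial E, R.natDegree ≤ n → (∀ i, gapply δ R (g i) = 0) → R = 0 := by
  have h0 : δ 0 = 0 := by have := hadd 0 0; simpa using this.symm
  have hacδ : ∀ c : C, δ (ac c) = 0 := fun c => (hconst (ac c)).mpr ⟨c, rfl⟩
  intro n
  induction n with
  | zero =>
    intro g hli R hdeg hann
    have hg : g 0 ≠ 0 := by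
      intro h
      have := hli (fun _ => 1) (by simp [h, Fin.sum_univ_succ]) 0
      exact one_ne_zero this
    have hR : R = Polynomial.C (R.coeff 0) := Polynomial.eq_C_of_natDegree_le_zero hdeg
    have := hann 0
    rw [hR, gapply_C] at this
    rcases mul_eq_zero.mp this with h' | h'
    · rw [hR, h', map_zero]
    · exact absurd h' hg
  | succ n ih =>
    intro g hli R hdeg hann
    set w := g (Fin.last (n + 1)) with hwdef
    have hw : w ≠ 0 := by
      intro h
      have hs : ∑ i, ac ((fun j => if j = Fin.last (n + 1) then (1 : C) else 0) i) * g i = 0 := by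
        rw [Fin.sum_univ_castSucc]
        have : ∀ i : Fin (n + 1), (i.castSucc = Fin.last (n + 1)) = False := by
          intro i; simp [(Fin.castSucc_lt_last i).ne]
        simp [this, ← hwdef, h]
      have := hli _ hs (Fin.last (n + 1))
      simp at this
    set S := gopMul δ R (Polynomial.C w) with hSdef
    have hS0 : S.coeff 0 = 0 := by
      rw [hSdef, coeff_gopMul_C_zero δ h0]
      exact hann (Fin.last (n + 1))
    set T := S.divX with hTdef
    have hSX : S = X * T := by
      conv_lhs => rw [← Polynomial.divX_mul_X_add S]
      rw [hS0, map_zero, add_zero, mul_comm]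
    have hSdeg : S.natDegree ≤ n + 2 := by
      rw [hSdef]
      have := natDegree_gopMul_le δ h0 R (Polynomial.C w)
      rw [Polynomial.natDegree_C] at this
      omega
    have hTdeg : T.natDegree ≤ n := by
      apply Polynomial.natDegree_le_iff_coeff_eq_zero.mpr
      intro m hm
      rw [hTdef, Polynomial.coeff_divX]
      apply Polynomial.coeff_eq_zero_of_natDegree_lt
      have hSdeg' : S.natDegree ≤ n + 1 := by
        rw [hSdef]
        have := natDegree_gopMul_le δ h0 R (Polynomial.C w)
        rw [Polynomial.natDegree_C, add_zero] at this
        omega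
      omega
    set u : Fin (n + 1) → E := fun i => g i.castSucc / w with hu
    set hh : Fin (n + 1) → E := fun i => δ (u i) with hhdef
    have hgapS : ∀ f : E, gapply δ S f = gapply δ R (w * f) := by
      intro f
      rw [hSdef, gapply_gopMul δ hadd hmul, gapply_C]
    have hTann : ∀ i : Fin (n + 1), gapply δ T (hh i) = 0 := by
      intro i
      have h1 : gapply δ T (hh i) = gapply δ S (u i) := by
        rw [hSX, gapply_X_mul]
      rw [h1, hgapS, mul_comm, div_mul_cancel₀ _ hw]
      exact hann i.castSucc
    have hhli : ∀ c : Fin (n + 1) → C, ∑ i, ac (c i) * hh i = 0 → ∀ i, c i = 0 := by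
      intro c hc
      let δh : E →+ E := AddMonoidHom.mk' δ hadd
      have hδsum : δ (∑ i, ac (c i) * u i) = ∑ i, δ (ac (c i) * u i) := map_sum δh _ _
      have hδ : δ (∑ i, ac (c i) * u i) = 0 := by
        rw [hδsum, ← hc]
        refine Finset.sum_congr rfl fun i _ => ?_
        rw [hmul, hacδ, zero_mul, add_zero, hhdef]
      obtain ⟨c', hc'⟩ := (hconst _).mp hδ
      have hmulw : ∑ i, ac (c i) * g i.castSucc = ac c' * w := by
        have h2 := congrArg (fun z => z * w) hc'
        simp only [Finset.sum_mul] at h2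
        rw [← h2]
        refine Finset.sum_congr rfl fun i _ => ?_
        rw [hu, mul_assoc, div_mul_cancel₀ _ hw]
      set c'' : Fin (n + 2) → C := Fin.snoc c (-c') with hc''
      have hzero : ∑ j, ac (c'' j) * g j = 0 := by
        rw [Fin.sum_univ_castSucc]
        have e1 : ∀ i : Fin (n + 1), c'' i.castSucc = c i := fun i => by simp [hc'']
        have e2 : c'' (Fin.last (n + 1)) = -c' := by simp [hc'']
        simp only [e1, e2, map_neg, neg_mul, ← hwdef]
        rw [hmulw, add_neg_cancel]
      intro i
      have := hli c'' hzero i.castSucc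
      simpa [hc''] using this
    have hT : T = 0 := ih hh hhli T hTdeg hTann
    have hS : S = 0 := by rw [hSX, hT, mul_zero]
    exact eq_zero_of_gopMul_C_eq_zero δ h0 R w hw hS

lemma gopMul_eq_sum_range {A : Polynomial E} {N : ℕ} (hN : A.natDegree < N) (B : Polynomial E) :
    gopMul δ A B = ∑ i ∈ Finset.range N, Polynomial.C (A.coeff i) * (gDmul δ)^[i] B := by
  rw [gopMul]
  exact Polynomial.sum_over_range' A (fun _ => by rw [map_zero, zero_mul]) N hN

section Transfer
variable {K : Type*} [Field K] (ψ : K →+* E) (δK : K → K)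

lemma map_dmap (h0K : δK 0 = 0) (h0E : δ 0 = 0)
    (hcompat : ∀ r, ψ (δK r) = δ (ψ r)) (P : Polynomial K) :
    (dmap δK P).map ψ = dmap δ (P.map ψ) := by
  ext n
  rw [Polynomial.coeff_map, coeff_dmap δK h0K, coeff_dmap δ h0E, Polynomial.coeff_map, hcompat]

lemma map_gDmul (h0K : δK 0 = 0) (h0E : δ 0 = 0)
    (hcompat : ∀ r, ψ (δK r) = δ (ψ r)) (P : Polynomial K) :
    (gDmul δK P).map ψ = gDmul δ (P.map ψ) := by
  rw [gDmul, Polynomial.map_add, Polynomial.map_mul, Polynomial.map_X,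
    map_dmap δ ψ δK h0K h0E hcompat, gDmul]

lemma map_gDmul_iter (h0K : δK 0 = 0) (h0E : δ 0 = 0)
    (hcompat : ∀ r, ψ (δK r) = δ (ψ r)) (P : Polynomial K) (k : ℕ) :
    ((gDmul δK)^[k] P).map ψ = (gDmul δ)^[k] (P.map ψ) := by
  induction k with
  | zero => rfl
  | succ k ih =>
    rw [Function.iterate_succ_apply', Function.iterate_succ_apply',
      map_gDmul δ ψ δK h0K h0E hcompat, ih]

lemma map_gopMul (h0K : δK 0 = 0) (h0E : δ 0 = 0)
    (hcompat : ∀ r, ψ (δK r) = δ (ψ r)) (A B : Polynomial K) :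
    (gopMul δK A B).map ψ = gopMul δ (A.map ψ) (B.map ψ) := by
  have hN : A.natDegree < A.natDegree + 1 := Nat.lt_succ_self _
  have hN' : (A.map ψ).natDegree < A.natDegree + 1 :=
    lt_of_le_of_lt Polynomial.natDegree_map_le hN
  rw [gopMul_eq_sum_range δK hN, gopMul_eq_sum_range δ hN', Polynomial.map_sum]
  refine Finset.sum_congr rfl fun i _ => ?_
  rw [Polynomial.map_mul, Polynomial.map_C, map_gDmul_iter δ ψ δK h0K h0E hcompat,
    Polynomial.coeff_map]

lemma gapply_map (P : Polynomial K) (f : E) :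
    gapply δ (P.map ψ) f = P.sum fun i a => ψ a * δ^[i] f := by
  rw [gapply_eq_sum_range δ
      (lt_of_le_of_lt Polynomial.natDegree_map_le (Nat.lt_succ_self _)),
    Polynomial.sum_over_range' P (fun _ => by rw [map_zero, zero_mul]) _ (Nat.lt_succ_self _)]
  exact Finset.sum_congr rfl fun i _ => by rw [Polynomial.coeff_map]

end Transfer

lemma gapply_zero_right (h0 : δ 0 = 0) (P : Polynomial E) : gapply δ P 0 = 0 := by
  rw [gapply, Polynomial.sum_def]
  apply Finset.sum_eq_zero
  intro i _
  rw [Function.iterate_fixed h0, mul_zero]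


end DOpAux

/-- Prop. 2(1): `[P]_L` is a constant iff `P·f` is a constant for every `f ∈ V(L)`,
where `V(L)` has dimension `ord L` in `E` and the constant field of `E` is `C`. -/
theorem constant_iff_constant_on_solutions
    (L P : DOp C) (hL : L ≠ 0) (hP : P.natDegree < L.natDegree)
    (F : DiffExt C)
    (hconstfield : ∀ f : F.carrier, F.δ f = 0 ↔ ∃ c : C, f = algebraMap C F.carrier c)
    (b : Fin L.natDegree → F.carrier)
    (hbsol : ∀ i, F.apply C L (b i) = 0)
    (hbli : LinearIndependent C b)
    (hbspan : ∀ f : F.carrier, F.apply C L f = 0 → f ∈ Submodule.span C (Set.range b)) :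
    IsConstantClass C L P ↔
      ∀ f : F.carrier, F.apply C L f = 0 → F.δ (F.apply C P f) = 0 := by
  classical
  set ψ : RatFunc C →+* F.carrier := algebraMap (RatFunc C) F.carrier with hψ
  have hK0 : KDeriv C 0 = 0 := by simp [KDeriv]
  have hE0 : F.δ 0 = 0 := by have := F.δ_add 0 0; simpa using this.symm
  have hD : Dmul C = DOpAux.gDmul (KDeriv C) := rfl
  have hO : opMul C = DOpAux.gopMul (KDeriv C) := rfl
  have hcompat : ∀ r, ψ (KDeriv C r) = F.δ (ψ r) := fun r => (F.δ_algebraMap r).symm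
  have key : ∀ (A : DOp C) (f : F.carrier),
      F.apply C A f = DOpAux.gapply F.δ (A.map ψ) f := by
    intro A f
    rw [DOpAux.gapply_map F.δ ψ A f]
    rfl
  have keyD : ∀ (A : DOp C) (f : F.carrier),
      DOpAux.gapply F.δ ((Dmul C A).map ψ) f = F.δ (F.apply C A f) := by
    intro A f
    rw [hD, DOpAux.map_gDmul F.δ ψ (KDeriv C) hK0 hE0 hcompat,
      DOpAux.gapply_gDmul F.δ F.δ_add F.δ_mul, key]
  constructor
  · rintro ⟨Q, hQ⟩ f hf
    rw [← keyD, hQ, hO, DOpAux.map_gopMul F.δ ψ (KDeriv C) hK0 hE0 hcompat,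
      DOpAux.gapply_gopMul F.δ F.δ_add F.δ_mul, ← key L f, hf,
      DOpAux.gapply_zero_right F.δ hE0]
  · intro h
    have hL1 : 1 ≤ L.natDegree := by omega
    obtain ⟨Q, R, hQR, hRdeg⟩ :=
      DOpAux.division (KDeriv C) hK0 L hL1 (Dmul C P).natDegree (Dmul C P) le_rfl
    have hann0 : ∀ i, DOpAux.gapply F.δ (R.map ψ) (b i) = 0 := by
      intro i
      have h1 := congrArg (fun z : DOp C => DOpAux.gapply F.δ (Polynomial.map ψ z) (b i)) hQR
      simp only [Polynomial.map_add, DOpAux.gapply_add] at h1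
      rw [keyD, h (b i) (hbsol i), DOpAux.map_gopMul F.δ ψ (KDeriv C) hK0 hE0 hcompat,
        DOpAux.gapply_gopMul F.δ F.δ_add F.δ_mul, ← key L (b i), hbsol i,
        DOpAux.gapply_zero_right F.δ hE0, zero_add] at h1
      exact h1.symm
    set n := L.natDegree - 1 with hn
    have hnn : n + 1 = L.natDegree := by omega
    set g : Fin (n + 1) → F.carrier := fun i => b (Fin.cast hnn i) with hg
    have hli : ∀ c : Fin (n + 1) → C, ∑ i, algebraMap C F.carrier (c i) * g i = 0 →
        ∀ i, c i = 0 := by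
      intro c hc i
      have hli' := Fintype.linearIndependent_iff.mp hbli (fun j => c (Fin.cast hnn.symm j))
      have hsum : ∑ j, (c (Fin.cast hnn.symm j)) • b j = 0 := by
        rw [← hc]
        refine (Fintype.sum_equiv (finCongr hnn) _ _ ?_).symm
        intro i
        have hcast : (Fin.cast hnn.symm ((finCongr hnn) i)) = i := by ext; simp
        rw [Algebra.smul_def, hcast]
        rfl
      have := hli' hsum (Fin.cast hnn i)
      simpa using this
    have hRmapdeg : (R.map ψ).natDegree ≤ n :=
      le_trans Polynomial.natDegree_map_le (by omega)
    have hanng : ∀ i, DOpAux.gapply F.δ (R.map ψ) (g i) = 0 := fun i => hann0 _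
    have hR0 : R.map ψ = 0 :=
      DOpAux.vanish F.δ (algebraMap C F.carrier) F.δ_add F.δ_mul hconstfield n g hli
        (R.map ψ) hRmapdeg hanng
    have hR : R = 0 := by
      rwa [Polynomial.map_eq_zero_iff ψ.injective] at hR0
    exact ⟨Q, by rw [hQR, hR, add_zero, hO]⟩

end
end

section
/- Let L ∈ K[D] be of order r. The set of constants of K[D]/⟨L⟩ forms a C-vector space of dimension at most r. -/
/- A constant `[P]_L` with `ord P < r = ord L` satisfies `D·P = q·L` for some `q ∈ K`, and
comparing the coefficients of `D^r` forces `q = p_{r-1}/ℓ`, where `ℓ` is the leading coefficient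
of `L`. So `P` is a horizontal vector of `∇P = D·P - (p_{r-1}/ℓ)·L`, an additive map on operators
with `∇(a·P) = a·∇P + a'·P`. Horizontal vectors that are linearly independent over the constants
`C` of `K` stay linearly independent over `K`: normalize a shortest `K`-relation to have a
coefficient `1` and apply `∇` to get a shorter one, so all coefficients are constants. Hence these
representatives lie in a `C`-space of dimension at most `dim_K {P | ord P < r} = r`. -/

open Polynomial

section Horizontal

variable {k K M ι : Type*} [Field k] [Field K] [Algebra k K] [AddCommGroup M] [Module K M]
  [Module k M] [IsScalarTower k K M] {d : Derivation k K K} {nabla : M →ₗ[k] M}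

theorem LinearIndependent.of_horizontal (hd : ∀ a, d a = 0 → a ∈ (algebraMap k K).range)
    (hnabla : ∀ (a : K) (m : M), nabla (a • m) = a • nabla m + d a • m)
    {v : ι → M} (hv : ∀ i, nabla (v i) = 0) (hli : LinearIndependent k v) :
    LinearIndependent K v := by
  classical
  rw [linearIndependent_iff']
  intro s
  induction s using Finset.strongInduction with
  | H s ih =>
  intro g hg i hi
  by_contra hgi
  set h := fun j => (g i)⁻¹ * g j
  have hhi : h i = 1 := inv_mul_cancel₀ hgi
  have hrel : ∑ j ∈ s, h j • v j = 0 := by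
    simp only [h, mul_smul, ← Finset.smul_sum, hg, smul_zero]
  have hderiv : ∑ j ∈ s.erase i, d (h j) • v j = 0 := by
    have := congrArg nabla hrel
    rw [map_sum, map_zero, ← Finset.add_sum_erase s _ hi] at this
    simpa only [hnabla, hv, smul_zero, zero_add, hhi, d.map_one_eq_zero, zero_smul] using this
  have hconst : ∀ j ∈ s, d (h j) = 0 := by
    intro j hj
    rcases eq_or_ne j i with rfl | hji
    · rw [hhi, d.map_one_eq_zero]
    · exact ih _ (Finset.erase_ssubset hi) _ hderiv j (Finset.mem_erase.mpr ⟨hji, hj⟩)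
  choose! c hc using fun j (hj : j ∈ s) => hd _ (hconst j hj)
  have hrelk : ∑ j ∈ s, c j • v j = 0 := by
    rw [← hrel]
    refine Finset.sum_congr rfl fun j hj => ?_
    rw [← hc j hj, algebraMap_smul]
  rw [← hc i hi, linearIndependent_iff'.mp hli s c hrelk i hi, map_zero] at hhi
  exact zero_ne_one hhi

theorem rank_restrictScalars_inf_ker_le_finrank
    (hd : ∀ a, d a = 0 → a ∈ (algebraMap k K).range)
    (hnabla : ∀ (a : K) (m : M), nabla (a • m) = a • nabla m + d a • m)
    (W : Submodule K M) [Module.Finite K W] :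
    Module.rank k ↥(W.restrictScalars k ⊓ LinearMap.ker nabla) ≤ Module.finrank K W := by
  set H := W.restrictScalars k ⊓ LinearMap.ker nabla
  refine rank_le fun s hs => ?_
  have hK : LinearIndependent K fun i : s => ((i : H) : M) :=
    (hs.map' H.subtype H.ker_subtype).of_horizontal hd hnabla fun i => (i : H).2.2
  have hW : LinearIndependent K fun i : s => (⟨(i : H), (i : H).2.1⟩ : W) :=
    LinearIndependent.of_comp W.subtype hK
  simpa using hW.fintype_card_le_finrank

end Horizontal

theorem Submodule.exists_fin_le_span_of_rank_le {K M : Type*} [DivisionRing K]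
    [AddCommGroup M] [Module K M] (V : Submodule K M) {n : ℕ} (hn : Module.rank K V ≤ n) :
    ∃ b : Fin n → M, V ≤ span K (Set.range b) := by
  have : FiniteDimensional K (span K (V : Set M)) := by
    rw [span_eq]
    exact Module.rank_lt_aleph0_iff.mp (hn.trans_lt (Cardinal.natCast_lt_aleph0))
  obtain ⟨f, -, hf, -⟩ := exists_fun_fin_finrank_span_eq K (V : Set M)
  have hm : Module.finrank K (span K (V : Set M)) ≤ n := by
    rw [span_eq]
    exact Module.finrank_le_of_rank_le hn
  refine ⟨fun i => if hi : (i : ℕ) < Module.finrank K (span K (V : Set M)) then f ⟨i, hi⟩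
    else 0, ?_⟩
  calc V = span K (Set.range f) := by rw [hf, span_eq]
    _ ≤ _ := span_mono (by rintro _ ⟨j, rfl⟩; exact ⟨Fin.castLE hm j, dif_pos j.2⟩)

section KDeriv

variable {C : Type} [Field C]

local notation "ι" => algebraMap C[X] (RatFunc C)

lemma KDeriv_div (p q : C[X]) (hq : q ≠ 0) :
    KDeriv C (ι p / ι q) = (ι (derivative p) * ι q - ι p * ι (derivative q)) / ι q ^ 2 := by
  set r := ι p / ι q
  have hq' : ι q ≠ 0 := RatFunc.algebraMap_ne_zero hq
  have hd : ι r.denom ≠ 0 := RatFunc.algebraMap_ne_zero r.denom_ne_zero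
  have hcross : r.num * q = p * r.denom := by
    apply IsFractionRing.injective C[X] (RatFunc C)
    have := RatFunc.num_div_denom r
    rw [div_eq_div_iff hd hq'] at this
    simpa only [map_mul] using this
  have hcross' := congrArg derivative hcross
  simp only [derivative_mul] at hcross'
  rw [KDeriv, div_eq_div_iff (pow_ne_zero _ hd) (pow_ne_zero _ hq'), ← map_pow, ← map_pow]
  simp only [← map_mul, ← map_sub]
  congr 1
  linear_combination (q * r.denom) * hcross' -
    (derivative r.denom * q + derivative q * r.denom) * hcross

lemma KDeriv_algebraMap_polynomial (p : C[X]) : KDeriv C (ι p) = ι (derivative p) := by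
  simpa using KDeriv_div p 1 one_ne_zero

lemma RatFunc.exists_eq_div (r : RatFunc C) : ∃ p q : C[X], q ≠ 0 ∧ r = ι p / ι q := by
  obtain ⟨p, q, hq, rfl⟩ := IsFractionRing.div_surjective C[X] r
  exact ⟨p, q, nonZeroDivisors.ne_zero hq, rfl⟩

lemma KDeriv_add (r s : RatFunc C) : KDeriv C (r + s) = KDeriv C r + KDeriv C s := by
  obtain ⟨p, q, hq, rfl⟩ := RatFunc.exists_eq_div r
  obtain ⟨p', q', hq', rfl⟩ := RatFunc.exists_eq_div s
  have h := RatFunc.algebraMap_ne_zero hq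
  have h' := RatFunc.algebraMap_ne_zero hq'
  rw [div_add_div _ _ h h', ← map_mul, ← map_mul, ← map_mul, ← map_add,
    KDeriv_div _ _ (mul_ne_zero hq hq'), KDeriv_div _ _ hq, KDeriv_div _ _ hq']
  simp only [derivative_mul, map_add, map_mul]
  field_simp
  ring

lemma KDeriv_mul (r s : RatFunc C) : KDeriv C (r * s) = r * KDeriv C s + KDeriv C r * s := by
  obtain ⟨p, q, hq, rfl⟩ := RatFunc.exists_eq_div r
  obtain ⟨p', q', hq', rfl⟩ := RatFunc.exists_eq_div s
  have h := RatFunc.algebraMap_ne_zero hq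
  have h' := RatFunc.algebraMap_ne_zero hq'
  rw [div_mul_div_comm, ← map_mul, ← map_mul,
    KDeriv_div _ _ (mul_ne_zero hq hq'), KDeriv_div _ _ hq, KDeriv_div _ _ hq']
  simp only [derivative_mul, map_add, map_mul]
  field_simp
  ring

lemma KDeriv_algebraMap (c : C) : KDeriv C (algebraMap C (RatFunc C) c) = 0 := by
  rw [IsScalarTower.algebraMap_apply C C[X], KDeriv_algebraMap_polynomial, algebraMap_eq,
    derivative_C, map_zero]

variable (C) in
noncomputable def KDerivation : Derivation C (RatFunc C) (RatFunc C) :=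
  Derivation.mk'
    { toFun := KDeriv C
      map_add' := KDeriv_add
      map_smul' := fun c r => by
        rw [Algebra.smul_def, KDeriv_mul, KDeriv_algebraMap, zero_mul, add_zero,
          RingHom.id_apply, Algebra.smul_def] }
    fun r s => by
      rw [LinearMap.coe_mk, AddHom.coe_mk, KDeriv_mul, smul_eq_mul, smul_eq_mul, mul_comm s]

@[simp]
lemma KDerivation_apply (r : RatFunc C) : KDerivation C r = KDeriv C r := rfl

lemma KDeriv_zero : KDeriv C 0 = 0 := (KDerivation C).map_zero

lemma mem_range_algebraMap_of_KDeriv_eq_zero [CharZero C] {r : RatFunc C}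
    (h : KDeriv C r = 0) : r ∈ (algebraMap C (RatFunc C)).range := by
  have hd : ι r.denom ≠ 0 := RatFunc.algebraMap_ne_zero r.denom_ne_zero
  have hw : wronskian r.denom r.num = 0 := by
    apply IsFractionRing.injective C[X] (RatFunc C)
    rw [KDeriv, div_eq_zero_iff, or_iff_left (pow_ne_zero _ hd)] at h
    rw [wronskian, map_zero, ← h]
    simp only [map_sub, map_mul]
    ring
  obtain ⟨hdenom, hnum⟩ := (RatFunc.isCoprime_num_denom r).symm.wronskian_eq_zero_iff.mp hw
  obtain ⟨a, ha⟩ : ∃ a, r.num = Polynomial.C a := ⟨_, eq_C_of_derivative_eq_zero hnum⟩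
  obtain ⟨b, hb⟩ : ∃ b, r.denom = Polynomial.C b := ⟨_, eq_C_of_derivative_eq_zero hdenom⟩
  refine ⟨a / b, ?_⟩
  rw [← RatFunc.num_div_denom r, ha, hb, map_div₀, ← algebraMap_eq]
  simp only [← IsScalarTower.algebraMap_apply]

end KDeriv

section Operators

variable {C : Type} [Field C]

lemma coeff_sum_C_KDeriv_mul_X_pow (P : DOp C) (n : ℕ) :
    (P.sum fun i a => Polynomial.C (KDeriv C a) * X ^ i).coeff n = KDeriv C (P.coeff n) := by
  rw [Polynomial.sum, finsetSum_coeff]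
  simp only [coeff_C_mul_X_pow, Finset.sum_ite_eq]
  split_ifs with h
  · rfl
  · rw [notMem_support_iff.mp h, KDeriv_zero]

lemma coeff_Dmul_zero (P : DOp C) : (Dmul C P).coeff 0 = KDeriv C (P.coeff 0) := by
  rw [Dmul, coeff_add, coeff_sum_C_KDeriv_mul_X_pow, coeff_X_mul_zero, zero_add]

lemma coeff_Dmul_succ (P : DOp C) (n : ℕ) :
    (Dmul C P).coeff (n + 1) = P.coeff n + KDeriv C (P.coeff (n + 1)) := by
  rw [Dmul, coeff_add, coeff_sum_C_KDeriv_mul_X_pow, coeff_X_mul]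

lemma Dmul_add (P Q : DOp C) : Dmul C (P + Q) = Dmul C P + Dmul C Q := by
  ext (_ | n)
  · simp only [coeff_Dmul_zero, coeff_add, KDeriv_add]
  · simp only [coeff_Dmul_succ, coeff_add, KDeriv_add]
    ring

lemma Dmul_smul (a : RatFunc C) (P : DOp C) :
    Dmul C (a • P) = a • Dmul C P + KDeriv C a • P := by
  ext (_ | n)
  · simp only [coeff_Dmul_zero, coeff_add, coeff_smul, smul_eq_mul, KDeriv_mul]
  · simp only [coeff_Dmul_succ, coeff_add, coeff_smul, smul_eq_mul, KDeriv_mul]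
    ring

lemma Dmul_zero : Dmul C 0 = 0 := by
  simpa using Dmul_add (0 : DOp C) 0

lemma Dmul_const_smul (c : C) (P : DOp C) : Dmul C (c • P) = c • Dmul C P := by
  rw [← algebraMap_smul (RatFunc C), Dmul_smul, ← KDerivation_apply, Derivation.map_algebraMap,
    zero_smul, add_zero, algebraMap_smul]

lemma coeff_Dmul_natDegree_succ (P : DOp C) :
    (Dmul C P).coeff (P.natDegree + 1) = P.leadingCoeff := by
  rw [coeff_Dmul_succ, coeff_eq_zero_of_natDegree_lt P.natDegree.lt_succ_self, KDeriv_zero,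
    add_zero, leadingCoeff]

lemma natDegree_Dmul_le (P : DOp C) : (Dmul C P).natDegree ≤ P.natDegree + 1 := by
  rw [natDegree_le_iff_coeff_eq_zero]
  rintro (_ | m) hm
  · omega
  · rw [coeff_Dmul_succ, coeff_eq_zero_of_natDegree_lt (by omega),
      coeff_eq_zero_of_natDegree_lt (by omega), KDeriv_zero, add_zero]

lemma natDegree_Dmul {P : DOp C} (hP : P ≠ 0) : (Dmul C P).natDegree = P.natDegree + 1 :=
  natDegree_eq_of_le_of_coeff_ne_zero (natDegree_Dmul_le P)
    (by rw [coeff_Dmul_natDegree_succ]; exact leadingCoeff_ne_zero.mpr hP)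

lemma leadingCoeff_Dmul (P : DOp C) : (Dmul C P).leadingCoeff = P.leadingCoeff := by
  rcases eq_or_ne P 0 with rfl | hP
  · rw [Dmul_zero]
  · rw [leadingCoeff, natDegree_Dmul hP, coeff_Dmul_natDegree_succ]

lemma leadingCoeff_iterate_Dmul (L : DOp C) (i : ℕ) :
    ((Dmul C)^[i] L).leadingCoeff = L.leadingCoeff := by
  induction i with
  | zero => rfl
  | succ i ih => rw [Function.iterate_succ_apply', leadingCoeff_Dmul, ih]

lemma natDegree_iterate_Dmul {L : DOp C} (hL : L ≠ 0) (i : ℕ) :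
    ((Dmul C)^[i] L).natDegree = L.natDegree + i := by
  induction i with
  | zero => rfl
  | succ i ih =>
    have hne : (Dmul C)^[i] L ≠ 0 := by
      rw [← leadingCoeff_ne_zero, leadingCoeff_iterate_Dmul, leadingCoeff_ne_zero]
      exact hL
    rw [Function.iterate_succ_apply', natDegree_Dmul hne, ih, add_assoc]

lemma opMul_zero_left (L : DOp C) : opMul C 0 L = 0 := sum_zero_index _

lemma opMul_add_left (P Q L : DOp C) : opMul C (P + Q) L = opMul C P L + opMul C Q L :=
  sum_add_index _ _ _ (fun _ => by rw [map_zero, zero_mul])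
    (fun _ _ _ => by rw [map_add, add_mul])

lemma opMul_smul_left (a : RatFunc C) (Q L : DOp C) :
    opMul C (a • Q) L = a • opMul C Q L := by
  rw [opMul, opMul, sum_smul_index _ _ _ (fun _ => by rw [map_zero, zero_mul]), Polynomial.sum,
    Polynomial.sum, Finset.smul_sum]
  simp only [map_mul, mul_assoc, smul_eq_C_mul]

lemma opMul_C_left (a : RatFunc C) (L : DOp C) :
    opMul C (Polynomial.C a) L = Polynomial.C a * L := by
  rw [opMul, sum_C_index (by rw [map_zero, zero_mul]), Function.iterate_zero_apply]

lemma coeff_opMul_natDegree_add {L : DOp C} (hL : L ≠ 0) (Q : DOp C) :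
    (opMul C Q L).coeff (Q.natDegree + L.natDegree) = Q.leadingCoeff * L.leadingCoeff := by
  rw [opMul, Polynomial.sum, finsetSum_coeff, Finset.sum_eq_single Q.natDegree]
  · rw [coeff_C_mul, add_comm, ← natDegree_iterate_Dmul hL, coeff_natDegree, coeff_natDegree,
      leadingCoeff_iterate_Dmul]
  · intro i hi hne
    have hlt : i < Q.natDegree := lt_of_le_of_ne (le_natDegree_of_mem_supp i hi) hne
    rw [coeff_C_mul, coeff_eq_zero_of_natDegree_lt (p := (Dmul C)^[i] L)
      (by rw [natDegree_iterate_Dmul hL]; omega), mul_zero]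
  · intro h
    rw [coeff_C_mul, notMem_support_iff.mp h, zero_mul]

end Operators

section Constants

variable {C : Type} [Field C] {L P : DOp C}

lemma isConstantClass_zero (L : DOp C) : IsConstantClass C L 0 :=
  ⟨0, by rw [Dmul_zero, opMul_zero_left]⟩

lemma IsConstantClass.add {Q : DOp C} (hP : IsConstantClass C L P)
    (hQ : IsConstantClass C L Q) : IsConstantClass C L (P + Q) := by
  obtain ⟨A, hA⟩ := hP
  obtain ⟨B, hB⟩ := hQ
  exact ⟨A + B, by rw [Dmul_add, hA, hB, opMul_add_left]⟩

lemma IsConstantClass.smul (c : C) (hP : IsConstantClass C L P) :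
    IsConstantClass C L (c • P) := by
  obtain ⟨A, hA⟩ := hP
  refine ⟨c • A, ?_⟩
  rw [Dmul_const_smul, hA, ← algebraMap_smul (RatFunc C) c A, opMul_smul_left,
    algebraMap_smul]

lemma IsConstantClass.exists_Dmul_eq_C_mul (hdeg : P.natDegree < L.natDegree)
    (hP : IsConstantClass C L P) : ∃ q, Dmul C P = Polynomial.C q * L := by
  obtain ⟨Q, hQ⟩ := hP
  have hL : L ≠ 0 := ne_zero_of_natDegree_gt hdeg
  suffices hQ0 : Q.natDegree = 0 by
    obtain ⟨q, rfl⟩ : ∃ q, Q = Polynomial.C q := ⟨_, eq_C_of_natDegree_eq_zero hQ0⟩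
    exact ⟨q, by rw [hQ, opMul_C_left]⟩
  by_contra hQ0
  have hQne : Q ≠ 0 := by
    rintro rfl
    exact hQ0 natDegree_zero
  have hle : Q.natDegree + L.natDegree ≤ (Dmul C P).natDegree := by
    rw [hQ]
    refine le_natDegree_of_ne_zero ?_
    rw [coeff_opMul_natDegree_add hL]
    exact mul_ne_zero (leadingCoeff_ne_zero.mpr hQne) (leadingCoeff_ne_zero.mpr hL)
  have := natDegree_Dmul_le P
  omega

/- `D·[P]_L` computed on representatives of order `< r = ord L`: for those, `D·P` has
`D^r`-coefficient `p_{r-1}`, which the subtracted multiple of `L` cancels. -/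
variable (L) in
noncomputable def Drem : DOp C →ₗ[C] DOp C where
  toFun P := Dmul C P - Polynomial.C (P.coeff (L.natDegree - 1) / L.leadingCoeff) * L
  map_add' P Q := by
    rw [Dmul_add, coeff_add, add_div, map_add, add_mul]
    abel
  map_smul' c P := by
    rw [Dmul_const_smul, coeff_smul, smul_div_assoc, ← smul_C, smul_mul_assoc,
      RingHom.id_apply, smul_sub]

lemma Drem_apply (P : DOp C) :
    Drem L P = Dmul C P - Polynomial.C (P.coeff (L.natDegree - 1) / L.leadingCoeff) * L := rfl

lemma Drem_smul (a : RatFunc C) (P : DOp C) :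
    Drem L (a • P) = a • Drem L P + KDeriv C a • P := by
  rw [Drem_apply, Drem_apply, Dmul_smul, coeff_smul, smul_eq_mul, mul_div_assoc, map_mul,
    mul_assoc, ← smul_eq_C_mul, smul_sub]
  abel

lemma IsConstantClass.Drem_eq_zero (hdeg : P.natDegree < L.natDegree)
    (hP : IsConstantClass C L P) : Drem L P = 0 := by
  obtain ⟨q, hq⟩ := hP.exists_Dmul_eq_C_mul hdeg
  obtain ⟨k, hk⟩ := Nat.exists_eq_add_one_of_ne_zero (ne_zero_of_lt hdeg)
  have hL : L.leadingCoeff ≠ 0 := leadingCoeff_ne_zero.mpr (ne_zero_of_natDegree_gt hdeg)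
  have hcoeff : P.coeff k = q * L.leadingCoeff := by
    have := congrArg (coeff · (k + 1)) hq
    rwa [coeff_Dmul_succ, coeff_eq_zero_of_natDegree_lt (p := P) (n := k + 1) (by omega),
      KDeriv_zero, add_zero, coeff_C_mul, ← hk] at this
  rw [Drem_apply, hq, hk, Nat.add_sub_cancel, hcoeff, mul_div_cancel_right₀ _ hL, sub_self]

end Constants

section ConstantRepresentatives

variable {C : Type} [Field C]

noncomputable def constantReps (L : DOp C) : Submodule C (DOp C) :=
  (degreeLT (RatFunc C) L.natDegree).restrictScalars C ⊓ LinearMap.ker (Drem L)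

lemma IsConstantClass.mem_constantReps {L P : DOp C} (hdeg : P.natDegree < L.natDegree)
    (hP : IsConstantClass C L P) : P ∈ constantReps L :=
  ⟨mem_degreeLT.mpr (degree_le_natDegree.trans_lt (by exact_mod_cast hdeg)),
    hP.Drem_eq_zero hdeg⟩

lemma rank_constantReps_le [CharZero C] (L : DOp C) :
    Module.rank C (constantReps L) ≤ L.natDegree := by
  have : Module.Finite (RatFunc C) (degreeLT (RatFunc C) L.natDegree) :=
    Module.Finite.equiv (degreeLTEquiv _ _).symm
  calc Module.rank C (constantReps L)
      ≤ Module.finrank (RatFunc C) (degreeLT (RatFunc C) L.natDegree) :=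
        rank_restrictScalars_inf_ker_le_finrank (d := KDerivation C)
          (fun _ => mem_range_algebraMap_of_KDeriv_eq_zero) Drem_smul _
    _ = L.natDegree := by rw [(degreeLTEquiv _ _).finrank_eq, Module.finrank_fin_fun]

end ConstantRepresentatives

variable (C : Type) [Field C] [IsAlgClosed C] [CharZero C]

theorem constants_form_space_of_dimension_at_most_order (L : DOp C) :
    (IsConstantClass C L 0) ∧
    (∀ P Q : DOp C, IsConstantClass C L P → IsConstantClass C L Q →
      IsConstantClass C L (P + Q)) ∧
    (∀ (c : C) (P : DOp C), IsConstantClass C L P → IsConstantClass C L (c • P)) ∧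
    ∃ b : Fin L.natDegree → DOp C, ∀ P : DOp C, P.natDegree < L.natDegree →
      IsConstantClass C L P → P ∈ Submodule.span C (Set.range b) := by
  refine ⟨isConstantClass_zero L, fun _ _ => IsConstantClass.add,
    fun c _ => IsConstantClass.smul c, ?_⟩
  obtain ⟨b, hb⟩ := (constantReps L).exists_fin_le_span_of_rank_le (rank_constantReps_le L)
  exact ⟨b, fun P hdeg hP => hb (hP.mem_constantReps hdeg)⟩
end

section
/- If f is an algebraic function over K = C(x) with minimal polynomial m = (y − f₁)⋯(y − f_d) (f₁,…,f_d the conjugates of f in an algebraic closure), and f is a solution of L ∈ K[D], then for each i, the i-th coefficient of m, being (up to sign) the (d−i)-th elementary symmetric polynomial in f₁,…,f_d, is annihilated by the symmetric power L^{⊗(d−i)}; since it lies in K, it is a rational solution of L^{⊗(d−i)}. -/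
/-! Up to the sign `(-1)^(d-i)`, the `i`-th coefficient of `m = minpoly f` is the elementary
symmetric function `e_{d-i}` of the conjugates of `f`, a sum of products of `d - i` conjugates.
Every conjugate `g` solves `L`: since `m` is separable, `g' = v(g)` for a polynomial `v`
depending only on `m`, hence `L g = Q(g)` for one `Q ∈ K[X]`, and `m ∣ Q` because
`Q(f) = L f = 0`. So the symmetric power kills each product, hence the coefficient. -/

open Polynomial

namespace Differential

open scoped Differential

variable {A B : Type*} [CommRing A] [CommRing B] [Differential A] [Differential B] [Algebra A B]
  [DifferentialAlgebra A B]

theorem deriv_eq_aeval_of_aeval_eq_zero {p U V : A[X]} (hUV : U * p + V * derivative p = 1)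
    {y : B} (hy : aeval y p = 0) : y′ = aeval y (-(V * mapCoeffs p)) := by
  have hdiff : aeval y (mapCoeffs p) + aeval y (derivative p) * y′ = 0 := by
    rw [← deriv_aeval_eq, hy, map_zero]
  have hunit : aeval y V * aeval y (derivative p) = 1 := by
    simpa [hy] using congrArg (aeval y) hUV
  calc y′ = aeval y V * (aeval y (derivative p) * y′) := by rw [← mul_assoc, hunit, one_mul]
    _ = aeval y (-(V * mapCoeffs p)) := by
      rw [eq_neg_of_add_eq_zero_right hdiff, map_neg, map_mul]; ring

theorem iterate_deriv_eq_aeval {v : A[X]} {y : B} (hy : y′ = aeval y v) (n : ℕ) :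
    (⇑(deriv : Derivation ℤ B B))^[n] y = aeval y ((⇑(implicitDeriv v))^[n] X) := by
  induction n with
  | zero => simp
  | succ n ih =>
    rw [Function.iterate_succ_apply', ih, deriv_aeval_eq_implicitDeriv y v hy,
      Function.iterate_succ_apply']

end Differential

theorem Polynomial.aeval_eq_zero_of_map_eq_prod_X_sub_C {R B ι : Type*} [CommSemiring R]
    [CommRing B] [Algebra R B] [Fintype ι] {p : R[X]} {r : ι → B}
    (h : p.map (algebraMap R B) = ∏ i, (X - C (r i))) (j : ι) : aeval (r j) p = 0 := by
  rw [aeval_def, ← eval_map, h, eval_prod]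
  exact Finset.prod_eq_zero (Finset.mem_univ j) (by simp)

theorem Polynomial.algebraMap_coeff_eq_esymm {R B : Type*} [CommSemiring R] [CommRing B]
    [Algebra R B] {p : R[X]} {d : ℕ} {r : Fin d → B}
    (h : p.map (algebraMap R B) = ∏ i, (X - C (r i))) {i : ℕ} (hi : i ≤ d) :
    algebraMap R B (p.coeff i) = (-1) ^ (d - i) * (Finset.univ.val.map r).esymm (d - i) := by
  have hcard : Multiset.card (Finset.univ.val.map r) = d := by simp
  have hprod : ∏ i, (X - C (r i)) = ((Finset.univ.val.map r).map fun b => X - C b).prod := by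
    rw [Multiset.map_map]; rfl
  rw [← coeff_map, h, hprod, Multiset.prod_X_sub_C_coeff _ (hcard.symm ▸ hi), hcard]

namespace DiffExt

variable {C : Type} [Field C]

instance (F : DiffExt C) : Differential F.carrier :=
  ⟨Derivation.mk' (AddMonoidHom.mk' F.δ F.δ_add).toIntLinearMap fun a b => by
    simp [F.δ_mul, mul_comm]⟩

theorem kDeriv_add (F : DiffExt C) (r s : RatFunc C) :
    KDeriv C (r + s) = KDeriv C r + KDeriv C s :=
  (algebraMap (RatFunc C) F.carrier).injective <| by
    simp only [map_add, ← F.δ_algebraMap, F.δ_add]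

theorem kDeriv_mul (F : DiffExt C) (r s : RatFunc C) :
    KDeriv C (r * s) = r * KDeriv C s + KDeriv C r * s :=
  (algebraMap (RatFunc C) F.carrier).injective <| by
    simp only [map_add, map_mul, ← F.δ_algebraMap, F.δ_mul]

variable (F : DiffExt C)

/-- `KDeriv` is a derivation of `C(x)` because `F.δ` extends it. -/
noncomputable abbrev baseDifferential : Differential (RatFunc C) :=
  -- `RatFunc` carries its own `ℤ`-algebra structure, not defeq to the one `Differential` uses.
  letI : Algebra ℤ (RatFunc C) := Ring.toIntAlgebra _
  ⟨Derivation.mk' (AddMonoidHom.mk' (KDeriv C) F.kDeriv_add).toIntLinearMap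
    fun r s => by simp [F.kDeriv_mul, mul_comm]⟩

theorem iterate_δ_algebraMap (q : RatFunc C) (n : ℕ) :
    F.δ^[n] (algebraMap (RatFunc C) F.carrier q)
      = algebraMap (RatFunc C) F.carrier ((KDeriv C)^[n] q) :=
  (Function.Semiconj.iterate_right (fun r => (F.δ_algebraMap r).symm) n q).symm

theorem apply_algebraMap (S : DOp C) (q : RatFunc C) :
    F.apply C S (algebraMap (RatFunc C) F.carrier q)
      = algebraMap (RatFunc C) F.carrier (KApply C S q) := by
  simp only [DiffExt.apply, KApply, Polynomial.sum_def, map_sum, map_mul, iterate_δ_algebraMap]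

theorem apply_add (S : DOp C) (x y : F.carrier) :
    F.apply C S (x + y) = F.apply C S x + F.apply C S y := by
  simp only [DiffExt.apply, Polynomial.sum_def, ← Finset.sum_add_distrib, ← mul_add]
  exact Finset.sum_congr rfl fun n _ =>
    congrArg _ (iterate_map_add (AddMonoidHom.mk' F.δ F.δ_add) n x y)

theorem apply_neg (S : DOp C) (x : F.carrier) : F.apply C S (-x) = -F.apply C S x :=
  (AddMonoidHom.mk' (F.apply C S) (F.apply_add S)).map_neg x

theorem apply_sum {ι : Type*} (S : DOp C) (t : Finset ι) (x : ι → F.carrier) :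
    F.apply C S (∑ j ∈ t, x j) = ∑ j ∈ t, F.apply C S (x j) :=
  map_sum (AddMonoidHom.mk' (F.apply C S) (F.apply_add S)) x t

theorem apply_eq_aeval (L : DOp C) {y : F.carrier} {P : ℕ → (RatFunc C)[X]}
    (hP : ∀ n, F.δ^[n] y = aeval y (P n)) :
    F.apply C L y = aeval y (L.sum fun i a => Polynomial.C a * P i) := by
  simp only [DiffExt.apply, Polynomial.sum_def, map_sum, map_mul, aeval_C, hP]

theorem apply_eq_zero_of_aeval_minpoly_eq_zero [CharZero C] (L : DOp C) {f g : F.carrier}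
    (hf : IsIntegral (RatFunc C) f) (hLf : F.apply C L f = 0)
    (hg : aeval g (minpoly (RatFunc C) f) = 0) : F.apply C L g = 0 := by
  let _ := F.baseDifferential
  have _ : DifferentialAlgebra (RatFunc C) F.carrier := ⟨fun r => F.δ_algebraMap r⟩
  obtain ⟨U, V, hUV⟩ := (minpoly.irreducible hf).separable
  -- Separability makes `y ↦ δⁿ y` a polynomial map on the roots of `minpoly`, the same for all.
  have hiter : ∀ y, aeval y (minpoly (RatFunc C) f) = 0 → ∀ n,
      F.δ^[n] y = aeval y ((⇑(Differential.implicitDeriv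
        (-(V * Differential.mapCoeffs (minpoly (RatFunc C) f)))))^[n] X) :=
    fun y hy => Differential.iterate_deriv_eq_aeval
      (Differential.deriv_eq_aeval_of_aeval_eq_zero hUV hy)
  obtain ⟨W, hW⟩ := minpoly.dvd (RatFunc C) f
    ((F.apply_eq_aeval L (hiter f (minpoly.aeval _ f))).symm.trans hLf)
  rw [F.apply_eq_aeval L (hiter g hg), hW, map_mul, hg, zero_mul]

end DiffExt

namespace IsSymPow

variable {C : Type} [Field C] {L S : DOp C} {s : ℕ} {F : DiffExt C} {ι : Type*}
  {r : ι → F.carrier}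

theorem apply_prod_eq_zero (hS : IsSymPow C L S s) (hr : ∀ j, F.apply C L (r j) = 0)
    {t : Finset ι} (ht : t.card = s) : F.apply C S (∏ j ∈ t, r j) = 0 := by
  rw [← Finset.prod_coe_sort, ← (t.equivFinOfCardEq ht).symm.prod_comp]
  exact hS.2.1 F _ fun k => hr _

theorem apply_esymm_eq_zero (hS : IsSymPow C L S s) (hr : ∀ j, F.apply C L (r j) = 0)
    (t : Finset ι) : F.apply C S ((t.val.map r).esymm s) = 0 := by
  rw [Finset.esymm_map_val, F.apply_sum]
  exact Finset.sum_eq_zero fun u hu =>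
    hS.apply_prod_eq_zero hr (Finset.mem_powersetCard.1 hu).2

end IsSymPow

variable (C : Type) [Field C] [IsAlgClosed C] [CharZero C]

theorem minpoly_coeff_rational_solution_of_sympow (F : DiffExt C) (L : DOp C)
    (f : F.carrier) (hf : F.apply C L f = 0)
    (halg : IsAlgebraic (RatFunc C) f)
    (d : ℕ)
    (conj : Fin d → F.carrier)
    (hsplit : (minpoly (RatFunc C) f).map (algebraMap (RatFunc C) F.carrier)
        = ∏ i, (X - Polynomial.C (conj i))) :
    ∀ i ≤ d, ∀ S : DOp C, IsSymPow C L S (d - i) →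
      KApply C S ((minpoly (RatFunc C) f).coeff i) = 0 := by
  intro i hi S hS
  have hconj : ∀ j, F.apply C L (conj j) = 0 := fun j =>
    F.apply_eq_zero_of_aeval_minpoly_eq_zero L halg.isIntegral hf
      (aeval_eq_zero_of_map_eq_prod_X_sub_C hsplit j)
  apply (algebraMap (RatFunc C) F.carrier).injective
  rw [map_zero, ← F.apply_algebraMap, algebraMap_coeff_eq_esymm hsplit hi]
  obtain hsign | hsign := neg_one_pow_eq_or F.carrier (d - i)
  · rw [hsign, one_mul, hS.apply_esymm_eq_zero hconj]
  · rw [hsign, neg_one_mul, F.apply_neg, hS.apply_esymm_eq_zero hconj, neg_zero]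
end
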